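/- Let f : 𝔻 → ℂ be a spirallike function of type β (|β| < π/2): f is holomorphic, f(0) = 0, f′(0) = 1, f′(z) ≠ 0, f(z) ≠ 0 for z ≠ 0, and Re(e^{−iβ}·z f′(z)/f(z)) > 0 on 𝔻 \ {0}. Write f(z) = z + b₂z² + b₃z³ + ⋯ and set ℓ = e^{iβ}, a₂ = e^{iβ}·b₂, a₃ = e^{iβ}·b₃. Then for every ν ∈ ℂ, |a₃ − (ν − 1 + 1/ℓ)·a₂²| ≤ (cos β)·max(1, |1 + 4(ν − 1)cos β|). -/

import Mathlib

open Metric Complex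


/-- derivative of z * g z -/
lemma fs_deriv_id_mul (g : ℂ → ℂ) (z : ℂ) (hg : DifferentiableAt ℂ g z) :
    deriv (fun w => w * g w) z = g z + z * deriv g z := by
  rw [deriv_fun_mul differentiableAt_fun_id hg, deriv_id'']
  ring

/-- convex combination bound -/
lemma fs_convex_max (t M : ℝ) (ht0 : 0 ≤ t) (ht1 : t ≤ 1) (hM : 0 ≤ M) :
    (1 - t) + M * t ≤ max 1 M := by
  rcases le_total M 1 with h | h
  · have : (1 - t) + M * t ≤ 1 := by nlinarith
    exact this.trans (le_max_left _ _)
  · have : (1 - t) + M * t ≤ M := by nlinarith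
    exact this.trans (le_max_right _ _)

/-- Schwarz–Pick second-coefficient bound: if `v` is holomorphic on the unit disk with
`|v| ≤ 1`, then `|v'(0)| ≤ 1 - |v 0|²`. -/
lemma fs_schwarz_pick (v : ℂ → ℂ) (hv : DifferentiableOn ℂ v (ball 0 1))
    (hb : ∀ z ∈ ball (0:ℂ) 1, ‖v z‖ ≤ 1) :
    ‖deriv v 0‖ ≤ 1 - ‖v 0‖ ^ 2 := by
  have h0 : (0:ℂ) ∈ ball (0:ℂ) 1 := mem_ball_self one_pos
  by_cases hcase : ∀ z ∈ ball (0:ℂ) 1, ‖v z‖ < 1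
  · -- strict case: Möbius transform + Schwarz lemma
    set a := v 0 with ha
    have haa : ‖a‖ < 1 := hcase 0 h0
    have hnsa : Complex.normSq a < 1 := by
      have := Complex.sq_norm a
      nlinarith [norm_nonneg a]
    have hden : ∀ z ∈ ball (0:ℂ) 1, (1:ℂ) - (starRingEnd ℂ) a * v z ≠ 0 := by
      intro z hz h
      have h1 : (1:ℂ) = (starRingEnd ℂ) a * v z := by linear_combination h
      have : (1:ℝ) = ‖(starRingEnd ℂ) a * v z‖ := by
        rw [← h1]; simp
      rw [norm_mul, Complex.norm_conj] at this
      nlinarith [norm_nonneg (v z), hcase z hz, norm_nonneg a]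
    set ψ : ℂ → ℂ := fun z => (v z - a) / (1 - (starRingEnd ℂ) a * v z) with hψ
    have hψd : DifferentiableOn ℂ ψ (ball 0 1) := by
      apply DifferentiableOn.div (hv.sub_const a)
      · exact (differentiableOn_const 1).sub ((differentiableOn_const _).mul hv)
      · exact hden
    have hψ0 : ψ 0 = 0 := by simp [hψ, ha]
    have hψmaps : Set.MapsTo ψ (ball 0 1) (ball (ψ 0) 1) := by
      intro z hz
      rw [hψ0, mem_ball, dist_zero_right]
      have hd := hden z hz
      have hx : Complex.normSq (v z) < 1 := by
        have := Complex.sq_norm (v z)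
        nlinarith [norm_nonneg (v z), hcase z hz]
      have key : Complex.normSq (v z - a) < Complex.normSq (1 - (starRingEnd ℂ) a * v z) := by
        simp only [Complex.normSq_apply, Complex.sub_re, Complex.sub_im, Complex.mul_re,
          Complex.mul_im, Complex.one_re, Complex.one_im, Complex.conj_re, Complex.conj_im]
        simp only [Complex.normSq_apply] at hnsa hx
        nlinarith [mul_pos (sub_pos.2 hnsa) (sub_pos.2 hx)]
      have habs : ‖v z - a‖ < ‖1 - (starRingEnd ℂ) a * v z‖ := by
        have h1 := Complex.sq_norm (v z - a)
        have h2 := Complex.sq_norm (1 - (starRingEnd ℂ) a * v z)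
        nlinarith [norm_nonneg (v z - a),
          norm_nonneg (1 - (starRingEnd ℂ) a * v z)]
      rw [hψ]
      simp only [norm_div]
      rw [div_lt_one (norm_pos_iff.mpr hd)]
      exact habs
    have hSch : ‖deriv ψ 0‖ ≤ 1 / 1 :=
      Complex.norm_deriv_le_div_of_mapsTo_ball hψd (hψmaps.mono_right ball_subset_closedBall) one_pos
    have hva : DifferentiableAt ℂ v 0 := hv.differentiableAt (isOpen_ball.mem_nhds h0)
    have hden0 : (1:ℂ) - (starRingEnd ℂ) a * a ≠ 0 := by
      simpa [ha] using hden 0 h0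
    have hderψ : deriv ψ 0 = deriv v 0 / (1 - (starRingEnd ℂ) a * a) := by
      rw [hψ, deriv_fun_div (hva.sub_const a)
        ((differentiableAt_const _).fun_sub ((differentiableAt_const _).fun_mul hva)) (by simpa using hden0)]
      rw [deriv_sub_const]
      have : deriv (fun z => (1:ℂ) - (starRingEnd ℂ) a * v z) 0 = -((starRingEnd ℂ) a * deriv v 0) := by
        rw [deriv_const_sub, deriv_const_mul _ hva]
      rw [this]
      rw [← ha]
      field_simp
      ring
    have hcc : (starRingEnd ℂ) a * a = (Complex.normSq a : ℂ) := by
      rw [mul_comm, Complex.mul_conj]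
    have : ‖deriv v 0‖ ≤ ‖(1:ℂ) - (starRingEnd ℂ) a * a‖ := by
      have h2 : ‖deriv ψ 0‖ ≤ 1 := by simpa using hSch
      rw [hderψ, norm_div] at h2
      rw [div_le_one (norm_pos_iff.mpr hden0)] at h2
      · exact h2
    calc ‖deriv v 0‖ ≤ ‖(1:ℂ) - (starRingEnd ℂ) a * a‖ := this
      _ = 1 - ‖a‖ ^ 2 := by
          rw [hcc, Complex.sq_norm]
          rw [show (1:ℂ) - (Complex.normSq a : ℂ) = ((1 - Complex.normSq a : ℝ) : ℂ) by push_cast; ring]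
          rw [Complex.norm_real, Real.norm_eq_abs, _root_.abs_of_nonneg (by linarith)]
  · -- constant case via maximum modulus
    push_neg at hcase
    obtain ⟨z₀, hz₀, hz₀1⟩ := hcase
    have habs1 : ‖v z₀‖ = 1 := le_antisymm (hb z₀ hz₀) hz₀1
    have hmax : IsMaxOn (norm ∘ v) (ball 0 1) z₀ := by
      intro x hx
      simp only [Function.comp_apply]
      rw [habs1]
      exact hb x hx
    have heq := Complex.eqOn_of_isPreconnected_of_isMaxOn_norm
      (convex_ball (0:ℂ) 1).isPreconnected isOpen_ball hv hz₀ hmax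
    have hv0 : v 0 = v z₀ := heq h0
    have hd0 : deriv v 0 = 0 := by
      have hev : v =ᶠ[nhds 0] fun _ => v z₀ :=
        Filter.eventuallyEq_of_mem (isOpen_ball.mem_nhds h0) heq
      rw [hev.deriv_eq, deriv_const]
    rw [hd0, norm_zero, hv0, habs1]
    norm_num

/-- Fekete–Szegő inequality for spirallike functions of type β on the unit disk
(one-dimensional case of Theorem 4.1 with g = g₀). -/
theorem fekete_szego_spirallike_one_dim
    (f : ℂ → ℂ) (β : ℝ) (hβ : |β| < Real.pi / 2)
    (hf : DifferentiableOn ℂ f (ball 0 1))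
    (hf0 : f 0 = 0) (hf'0 : deriv f 0 = 1)
    (hf' : ∀ z ∈ ball (0 : ℂ) 1, deriv f z ≠ 0)
    (hfne : ∀ z ∈ ball (0 : ℂ) 1, z ≠ 0 → f z ≠ 0)
    (hsp : ∀ z ∈ ball (0 : ℂ) 1, z ≠ 0 →
      0 < (Complex.exp (-(β : ℂ) * Complex.I) * z * deriv f z / f z).re)
    (a₂ a₃ : ℂ)
    (ha₂ : a₂ = Complex.exp ((β : ℂ) * Complex.I) * (iteratedDeriv 2 f 0 / 2))
    (ha₃ : a₃ = Complex.exp ((β : ℂ) * Complex.I) * (iteratedDeriv 3 f 0 / 6))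
    (ν : ℂ) :
    ‖a₃ - (ν - 1 + Complex.exp (-(β : ℂ) * Complex.I)) * a₂ ^ 2‖ ≤
      Real.cos β * max 1 (‖1 + 4 * (ν - 1) * (Real.cos β : ℂ)‖) := by
  have hβ' := abs_lt.1 hβ
  have hc : 0 < Real.cos β := Real.cos_pos_of_mem_Ioo ⟨hβ'.1, hβ'.2⟩
  set c := Real.cos β with hcdef
  set s := Real.sin β with hsdef
  set E := Complex.exp ((β:ℂ) * Complex.I) with hEdef
  set E' := Complex.exp (-(β:ℂ) * Complex.I) with hE'def
  have hB0 : (0:ℂ) ∈ ball (0:ℂ) 1 := mem_ball_self one_pos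
  have hBn : ball (0:ℂ) 1 ∈ nhds (0:ℂ) := isOpen_ball.mem_nhds hB0
  have hE : E = (c:ℂ) + (s:ℂ) * Complex.I := by
    rw [hEdef, Complex.exp_mul_I, ← Complex.ofReal_cos, ← Complex.ofReal_sin]
  have hE' : E' = (c:ℂ) - (s:ℂ) * Complex.I := by
    rw [hE'def, show -(β:ℂ) * Complex.I = ((-β : ℝ) : ℂ) * Complex.I by push_cast; ring,
      Complex.exp_mul_I, ← Complex.ofReal_cos, ← Complex.ofReal_sin, Real.cos_neg, Real.sin_neg,
      Complex.ofReal_neg, ← hcdef, ← hsdef]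
    ring
  have hEE' : E * E' = 1 := by
    rw [hEdef, hE'def, ← Complex.exp_add,
      show (β:ℂ) * Complex.I + -(β:ℂ) * Complex.I = 0 by ring, Complex.exp_zero]
  have hsum : E + E' = 2*(c:ℂ) := by rw [hE, hE']; ring
  have h2cE : 2*(c:ℂ)*E = 1 + E^2 := by linear_combination (-E) * hsum + hEE'
  have habsE : ‖E‖ = 1 := by rw [hEdef]; exact Complex.norm_exp_ofReal_mul_I β
  have hcne : (c:ℂ) ≠ 0 := Complex.ofReal_ne_zero.mpr hc.ne'
  -- the function u = f z / z
  set u := dslope f 0 with hudef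
  have hu0 : u 0 = 1 := by rw [hudef, dslope_same]; exact hf'0
  have hfu : ∀ z : ℂ, f z = z * u z := by
    intro z
    have h := sub_smul_dslope f 0 z
    simp only [sub_zero, hf0, smul_eq_mul] at h
    rw [← h, hudef]
  have huD : DifferentiableOn ℂ u (ball 0 1) := (Complex.differentiableOn_dslope hBn).mpr hf
  have huA : AnalyticOnNhd ℂ u (ball 0 1) := huD.analyticOnNhd isOpen_ball
  have hune : ∀ z ∈ ball (0:ℂ) 1, u z ≠ 0 := by
    intro z hz
    rcases eq_or_ne z 0 with rfl | hz0
    · rw [hu0]; exact one_ne_zero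
    · intro h
      exact hfne z hz hz0 (by rw [hfu z, h, mul_zero])
  have hfA : AnalyticOnNhd ℂ f (ball 0 1) := hf.analyticOnNhd isOpen_ball
  have hdfA : AnalyticOnNhd ℂ (deriv f) (ball 0 1) := hfA.deriv
  have hduA : AnalyticOnNhd ℂ (deriv u) (ball 0 1) := huA.deriv
  have hdduA : AnalyticOnNhd ℂ (deriv (deriv u)) (ball 0 1) := hduA.deriv
  have hdf : ∀ z ∈ ball (0:ℂ) 1, deriv f z = u z + z * deriv u z := by
    intro z hz
    have hfe : f = fun w => w * u w := funext hfu
    rw [hfe, fs_deriv_id_mul u z (huA z hz).differentiableAt]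
  -- q = z f' / f
  set q : ℂ → ℂ := fun z => deriv f z / u z with hqdef
  have hq0 : q 0 = 1 := by rw [hqdef]; simp [hf'0, hu0]
  have hqA : AnalyticOnNhd ℂ q (ball 0 1) := fun z hz => (hdfA z hz).div (huA z hz) (hune z hz)
  have hdqA : AnalyticOnNhd ℂ (deriv q) (ball 0 1) := hqA.deriv
  set Q1 := deriv q 0 with hQ1def
  set Q2 := deriv (deriv q) 0 with hQ2def
  set U1 := deriv u 0 with hU1def
  set U2 := deriv (deriv u) 0 with hU2def
  have hqu : Set.EqOn (fun z => q z * u z) (fun z => u z + z * deriv u z) (ball 0 1) := by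
    intro z hz
    simp only [hqdef]
    rw [div_mul_cancel₀ _ (hune z hz)]
    exact hdf z hz
  have hqu' : Set.EqOn (fun z => deriv q z * u z + q z * deriv u z)
      (fun z => 2 * deriv u z + z * deriv (deriv u) z) (ball 0 1) := by
    intro z hz
    have h3 : deriv (fun w => q w * u w) z = deriv (fun w => u w + w * deriv u w) z :=
      (Filter.eventuallyEq_of_mem (isOpen_ball.mem_nhds hz) hqu).deriv_eq
    rw [deriv_fun_mul (hqA z hz).differentiableAt (huA z hz).differentiableAt,
      deriv_fun_add (huA z hz).differentiableAt
        (differentiableAt_fun_id.fun_mul (hduA z hz).differentiableAt),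
      fs_deriv_id_mul _ z (hduA z hz).differentiableAt] at h3
    simp only
    rw [h3]; ring
  have hQ1U : Q1 = U1 := by
    have h := hqu' hB0
    simp only [hu0, hq0] at h
    rw [hQ1def, hU1def]
    linear_combination h
  have hquQ2 : Q2 + 2*Q1*U1 + U2 = 3*U2 := by
    have h3 : deriv (fun z => deriv q z * u z + q z * deriv u z) 0
        = deriv (fun z => 2 * deriv u z + z * deriv (deriv u) z) 0 :=
      (Filter.eventuallyEq_of_mem hBn hqu').deriv_eq
    rw [deriv_fun_add ((hdqA 0 hB0).differentiableAt.fun_mul (huA 0 hB0).differentiableAt)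
        ((hqA 0 hB0).differentiableAt.fun_mul (hduA 0 hB0).differentiableAt),
      deriv_fun_mul (hdqA 0 hB0).differentiableAt (huA 0 hB0).differentiableAt,
      deriv_fun_mul (hqA 0 hB0).differentiableAt (hduA 0 hB0).differentiableAt,
      deriv_fun_add ((hduA 0 hB0).differentiableAt.const_mul 2)
        (differentiableAt_fun_id.fun_mul (hdduA 0 hB0).differentiableAt),
      deriv_const_mul 2 (hduA 0 hB0).differentiableAt,
      fs_deriv_id_mul _ 0 (hdduA 0 hB0).differentiableAt, hu0, hq0] at h3
    linear_combination h3
  have hitd2 : iteratedDeriv 2 f 0 = 2 * U1 := by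
    have e1 : iteratedDeriv 2 f 0 = deriv (deriv f) 0 := by
      simp [iteratedDeriv_succ, iteratedDeriv_zero]
    have h3 : deriv (deriv f) 0 = deriv (fun z => u z + z * deriv u z) 0 :=
      (Filter.eventuallyEq_of_mem hBn (fun z hz => hdf z hz)).deriv_eq
    rw [e1, h3, deriv_fun_add (huA 0 hB0).differentiableAt
        (differentiableAt_fun_id.fun_mul (hduA 0 hB0).differentiableAt),
      fs_deriv_id_mul _ 0 (hduA 0 hB0).differentiableAt]
    rw [hU1def]; ring
  have hitd3 : iteratedDeriv 3 f 0 = 3 * U2 := by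
    have e1 : iteratedDeriv 3 f 0 = deriv (deriv (deriv f)) 0 := by
      simp [iteratedDeriv_succ, iteratedDeriv_zero]
    have hddfE : Set.EqOn (deriv (deriv f))
        (fun z => 2 * deriv u z + z * deriv (deriv u) z) (ball 0 1) := by
      intro z hz
      have h3 : deriv (deriv f) z = deriv (fun w => u w + w * deriv u w) z :=
        (Filter.eventuallyEq_of_mem (isOpen_ball.mem_nhds hz) (fun w hw => hdf w hw)).deriv_eq
      rw [h3, deriv_fun_add (huA z hz).differentiableAt
          (differentiableAt_fun_id.fun_mul (hduA z hz).differentiableAt),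
        fs_deriv_id_mul _ z (hduA z hz).differentiableAt]
      simp only
      ring
    have h4 : deriv (deriv (deriv f)) 0
        = deriv (fun z => 2 * deriv u z + z * deriv (deriv u) z) 0 :=
      (Filter.eventuallyEq_of_mem hBn hddfE).deriv_eq
    rw [e1, h4, deriv_fun_add ((hduA 0 hB0).differentiableAt.const_mul 2)
        (differentiableAt_fun_id.fun_mul (hdduA 0 hB0).differentiableAt),
      deriv_const_mul 2 (hduA 0 hB0).differentiableAt,
      fs_deriv_id_mul _ 0 (hdduA 0 hB0).differentiableAt]
    rw [hU2def]; ring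
  -- p = e^{-iβ} q has positive real part
  set p : ℂ → ℂ := fun z => E' * q z with hpdef
  have hpA : AnalyticOnNhd ℂ p (ball 0 1) := fun z hz => analyticAt_const.mul (hqA z hz)
  have hdpA : AnalyticOnNhd ℂ (deriv p) (ball 0 1) := hpA.deriv
  have hp0 : p 0 = E' := by rw [hpdef]; simp [hq0]
  have hpre : ∀ z ∈ ball (0:ℂ) 1, 0 < (p z).re := by
    intro z hz
    rcases eq_or_ne z 0 with rfl | hz0
    · rw [hp0, hE']; simpa using hc
    · have hfz := hfne z hz hz0
      have huz := hune z hz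
      have hpz : p z = E' * z * deriv f z / f z := by
        rw [hpdef]; simp only [hqdef]
        rw [hfu z]
        field_simp
      rw [hpz, hE'def]
      exact hsp z hz hz0
  have hpEne : ∀ z ∈ ball (0:ℂ) 1, p z + E ≠ 0 := by
    intro z hz h
    have h1 : (p z + E).re = (p z).re + c := by rw [Complex.add_re, hE]; simp
    rw [h] at h1
    simp only [Complex.zero_re] at h1
    nlinarith [hpre z hz]
  -- the Schur function w and its dslope v
  set w : ℂ → ℂ := fun z => (p z - E') / (p z + E) with hwdef
  have hwA : AnalyticOnNhd ℂ w (ball 0 1) := fun z hz =>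
    ((hpA z hz).sub analyticAt_const).div ((hpA z hz).add analyticAt_const) (hpEne z hz)
  have hwD : DifferentiableOn ℂ w (ball 0 1) := hwA.differentiableOn
  have hw0 : w 0 = 0 := by rw [hwdef]; simp [hp0]
  have hEre : E.re = c := by rw [hE]; simp
  have hEim : E.im = s := by rw [hE]; simp
  have hE're : E'.re = c := by rw [hE']; simp
  have hE'im : E'.im = -s := by rw [hE']; simp
  have hwlt : ∀ z ∈ ball (0:ℂ) 1, ‖w z‖ < 1 := by
    intro z hz
    have hd := hpEne z hz
    have hkey : Complex.normSq (p z - E') < Complex.normSq (p z + E) := by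
      simp only [Complex.normSq_apply, Complex.sub_re, Complex.sub_im, Complex.add_re,
        Complex.add_im, hEre, hEim, hE're, hE'im]
      nlinarith [mul_pos hc (hpre z hz)]
    rw [hwdef]
    simp only
    rw [norm_div, div_lt_one (norm_pos_iff.mpr hd)]
    have h1 := Complex.sq_norm (p z - E')
    have h2 := Complex.sq_norm (p z + E)
    nlinarith [norm_nonneg (p z - E'), norm_nonneg (p z + E)]
  have hwmaps : Set.MapsTo w (ball 0 1) (ball (w 0) 1) := by
    intro z hz
    rw [hw0, mem_ball, dist_zero_right]
    exact hwlt z hz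
  set v := dslope w 0 with hvdef
  have hvD : DifferentiableOn ℂ v (ball 0 1) := (Complex.differentiableOn_dslope hBn).mpr hwD
  have hvA : AnalyticOnNhd ℂ v (ball 0 1) := hvD.analyticOnNhd isOpen_ball
  have hvb : ∀ z ∈ ball (0:ℂ) 1, ‖v z‖ ≤ 1 := by
    intro z hz
    have h := Complex.norm_dslope_le_div_of_mapsTo_ball hwD (hwmaps.mono_right ball_subset_closedBall) hz
    rw [hvdef]
    simpa using h
  set d1 := v 0 with hd1def
  set d2 := deriv v 0 with hd2def
  have hd1w : d1 = deriv w 0 := by rw [hd1def, hvdef, dslope_same]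
  have hd1le : ‖d1‖ ≤ 1 := hvb 0 hB0
  have hd2le : ‖d2‖ ≤ 1 - ‖d1‖ ^ 2 := fs_schwarz_pick v hvD hvb
  have hwv : ∀ z : ℂ, w z = z * v z := by
    intro z
    have h := sub_smul_dslope w 0 z
    simp only [sub_zero, hw0, smul_eq_mul] at h
    rw [← h, hvdef]
  -- derivative computations for w
  have hdpE : ∀ z ∈ ball (0:ℂ) 1, deriv p z = E' * deriv q z := by
    intro z hz
    rw [hpdef]
    exact deriv_const_mul E' (hqA z hz).differentiableAt
  have hdw : Set.EqOn (deriv w) (fun z => 2*(c:ℂ) * deriv p z / (p z + E)^2) (ball 0 1) := by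
    intro z hz
    rw [hwdef]
    simp only
    rw [deriv_fun_div ((hpA z hz).differentiableAt.sub_const E')
      ((hpA z hz).differentiableAt.add_const E) (hpEne z hz), deriv_sub_const, deriv_add_const]
    have hnum : deriv p z * (p z + E) - (p z - E') * deriv p z = 2*(c:ℂ) * deriv p z := by
      linear_combination deriv p z * hsum
    rw [hnum]
  have hd1eq : 2*(c:ℂ) * d1 = E' * Q1 := by
    have h := hdw hB0
    simp only at h
    rw [hdpE 0 hB0, hp0] at h
    rw [hd1w, h, show E' + E = 2*(c:ℂ) by linear_combination hsum]
    rw [hQ1def]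
    field_simp
  have hddw1 : deriv (deriv w) 0 = 2 * d2 := by
    have hwe : Set.EqOn (deriv w) (fun z => v z + z * deriv v z) (ball 0 1) := by
      intro z hz
      have hwf : w = fun y => y * v y := funext hwv
      rw [hwf, fs_deriv_id_mul v z (hvA z hz).differentiableAt]
    have h3 : deriv (deriv w) 0 = deriv (fun z => v z + z * deriv v z) 0 :=
      (Filter.eventuallyEq_of_mem hBn hwe).deriv_eq
    rw [h3, deriv_fun_add (hvA 0 hB0).differentiableAt
        (differentiableAt_fun_id.fun_mul ((hvA.deriv) 0 hB0).differentiableAt),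
      fs_deriv_id_mul _ 0 ((hvA.deriv) 0 hB0).differentiableAt]
    rw [hd2def]; ring
  have hddw2 : deriv (deriv w) 0
      = (2*(c:ℂ)*(E'*Q2) * ((E'+E)^2) - 2*(c:ℂ)*(E'*Q1) * (2*(E'+E)*(E'*Q1))) / ((E'+E)^2)^2 := by
    have h3 : deriv (deriv w) 0 = deriv (fun z => 2*(c:ℂ) * deriv p z / (p z + E)^2) 0 :=
      (Filter.eventuallyEq_of_mem hBn hdw).deriv_eq
    have hdnum : DifferentiableAt ℂ (fun z => 2*(c:ℂ) * deriv p z) 0 :=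
      (hdpA 0 hB0).differentiableAt.const_mul _
    have hdden : DifferentiableAt ℂ (fun z => (p z + E)^2) 0 :=
      ((hpA 0 hB0).differentiableAt.add_const E).pow 2
    have hdne : (p 0 + E)^2 ≠ 0 := pow_ne_zero 2 (hpEne 0 hB0)
    rw [h3, deriv_fun_div hdnum hdden hdne,
      deriv_const_mul _ (hdpA 0 hB0).differentiableAt,
      deriv_fun_pow ((hpA 0 hB0).differentiableAt.add_const E) 2,
      deriv_add_const]
    have hddp : deriv (deriv p) 0 = E' * Q2 := by
      have h5 : deriv (deriv p) 0 = deriv (fun z => E' * deriv q z) 0 :=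
        (Filter.eventuallyEq_of_mem hBn hdpE).deriv_eq
      rw [h5, deriv_const_mul E' (hdqA 0 hB0).differentiableAt, hQ2def]
    rw [hddp, hdpE 0 hB0, hp0, hQ1def]
    norm_num
  have hd2eq : 32*(c:ℂ)^4 * d2 = 8*(c:ℂ)^3*(E'*Q2) - 8*(c:ℂ)^2*(E'*Q1)^2 := by
    have h := hddw1.symm.trans hddw2
    rw [show E' + E = 2*(c:ℂ) by linear_combination hsum] at h
    have h2cne : (2*(c:ℂ)) ≠ 0 := mul_ne_zero two_ne_zero hcne
    rw [eq_div_iff (pow_ne_zero 2 (pow_ne_zero 2 h2cne))] at h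
    linear_combination h
  -- assemble the algebraic identity
  have hA2 : iteratedDeriv 2 f 0 = 2 * Q1 := by rw [hitd2, hQ1U]
  have hA3 : iteratedDeriv 3 f 0 = (3/2) * (Q2 + 2*Q1^2) := by
    rw [hitd3]
    have hU2v : U2 = (Q2 + 2*Q1^2)/2 := by
      linear_combination (-(1:ℂ)/2) * hquQ2 + (-Q1) * hQ1U
    rw [hU2v]; ring
  have hFeq' : 32*(c:ℂ)^4 * (a₃ - (ν - 1 + E') * a₂^2)
      = 32*(c:ℂ)^4 * (E^2 * (c:ℂ) * (d2 - E^2*(1 + 4*(ν-1)*(c:ℂ))*d1^2)) := by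
    rw [ha₂, ha₃, hA2, hA3]
    clear_value E E' Q1 Q2 d1 d2 c
    linear_combination (8*(c:ℂ)^3*E^4*(1+4*(ν-1)*(c:ℂ))*(2*(c:ℂ)*d1 + E'*Q1)) * hd1eq
      + (-((c:ℂ)*E^2)) * hd2eq
      + (-8*(c:ℂ)^4*E*Q2 + 8*(c:ℂ)^3*Q1^2*(E*E'+1) + 8*(c:ℂ)^3*E^2*Q1^2*(E*E'+1)
          + 32*(c:ℂ)^4*(ν-1)*E^2*Q1^2*(E*E'+1) - 32*(c:ℂ)^4*E*Q1^2) * hEE'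
      + (-8*(c:ℂ)^3*Q1^2) * h2cE
  have hFeq : a₃ - (ν - 1 + E') * a₂^2
      = E^2 * (c:ℂ) * (d2 - E^2*(1 + 4*(ν-1)*(c:ℂ))*d1^2) :=
    mul_left_cancel₀ (mul_ne_zero (by norm_num) (pow_ne_zero 4 hcne) : (32*(c:ℂ)^4) ≠ 0) hFeq'
  -- final estimate
  rw [hFeq, norm_mul, norm_mul, norm_pow, habsE, one_pow, one_mul, Complex.norm_real, Real.norm_eq_abs,
    _root_.abs_of_pos hc]
  apply mul_le_mul_of_nonneg_left _ hc.le
  have ht1 : ‖d1‖ ^ 2 ≤ 1 := by nlinarith [norm_nonneg d1]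
  calc ‖d2 - E^2*(1 + 4*(ν-1)*(c:ℂ))*d1^2‖
      ≤ ‖d2‖ + ‖1 + 4*(ν-1)*(c:ℂ)‖ * ‖d1‖ ^ 2 := by
        have h := norm_add_le d2 (-(E^2*(1 + 4*(ν-1)*(c:ℂ))*d1^2))
        simpa [sub_eq_add_neg, map_mul, map_pow, habsE] using h
    _ ≤ (1 - ‖d1‖ ^ 2) + ‖1 + 4*(ν-1)*(c:ℂ)‖ * ‖d1‖ ^ 2 :=
        add_le_add_left hd2le _
    _ ≤ max 1 (‖1 + 4*(ν-1)*(c:ℂ)‖) :=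
        fs_convex_max _ _ (by positivity) ht1 (norm_nonneg _)
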